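/- For every integer n ≥ 2, A(n) + 2·B(n) = 16^n − v(n−1) − v(n). -/
import Mathlib


/-- The integer sequence `v`: `v(0)=1`, `v(1)=14`, `v(2)=224`, and for `m ≥ 2`,
`v(m+1) = 16·v(m) − v(m−1)`. -/
def vseq : ℕ → ℤ
  | 0 => 1
  | 1 => 14
  | 2 => 224
  | (m + 3) => 16 * vseq (m + 2) - vseq (m + 1)

/-- The pair `(A(n), B(n))` of integer sequences: `A(1)=1`, `B(1)=0`, `A(2)=16`,
`B(2)=1`, and for `n ≥ 3`, `A(n) = 16·(A(n−1) + B(n−1))` and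
`B(n) = 16^(n−2) − A(n−2) − B(n−2)`.  (The value at `0` is junk.) -/
def ABseq : ℕ → ℤ × ℤ
  | 0 => (0, 0)
  | 1 => (1, 0)
  | 2 => (16, 1)
  | (m + 3) =>
      (16 * ((ABseq (m + 2)).1 + (ABseq (m + 2)).2),
       16 ^ (m + 1) - (ABseq (m + 1)).1 - (ABseq (m + 1)).2)

/-- The sequence `A`. -/
def Aseq (n : ℕ) : ℤ := (ABseq n).1

/-- The sequence `B`. -/
def Bseq (n : ℕ) : ℤ := (ABseq n).2

lemma key : ∀ n : ℕ,
    14 * (Aseq (n + 2) + Bseq (n + 2)) =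
      14 * 16 ^ (n + 2) - 15 * vseq (n + 2) + vseq (n + 1)
  | 0 => by norm_num [Aseq, Bseq, ABseq, vseq]
  | 1 => by norm_num [Aseq, Bseq, ABseq, vseq]
  | (n + 2) => by
      have h1 := key n
      have h2 := key (n + 1)
      have hA : Aseq (n + 4) = 16 * (Aseq (n + 3) + Bseq (n + 3)) := by
        simp [Aseq, Bseq, ABseq]
      have hB : Bseq (n + 4) = 16 ^ (n + 2) - Aseq (n + 2) - Bseq (n + 2) := by
        simp [Aseq, Bseq, ABseq]
      have hv4 : vseq (n + 4) = 16 * vseq (n + 3) - vseq (n + 2) := by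
        simp [vseq]
      have hv3 : vseq (n + 3) = 16 * vseq (n + 2) - vseq (n + 1) := by
        simp [vseq]
      have hp : (16 : ℤ) ^ (n + 4) = 16 ^ (n + 2) * 256 := by ring
      rw [hA, hB, hv4, hv3, hp]
      rw [show (16:ℤ)^(n+3) = 16^(n+2)*16 by ring] at h2
      linarith

/-- For every integer `n ≥ 2`, `A(n) + 2·B(n) = 16^n − v(n−1) − v(n)`. -/
theorem Aseq_add_two_Bseq (n : ℕ) (hn : 2 ≤ n) :
    Aseq n + 2 * Bseq n = 16 ^ n - vseq (n - 1) - vseq n := by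
  match n, hn with
  | 2, _ => norm_num [Aseq, Bseq, ABseq, vseq]
  | 3, _ => norm_num [Aseq, Bseq, ABseq, vseq]
  | (m + 4), _ =>
    have h1 := key (m + 1)
    have h2 := key m
    simp only [show m + 1 + 2 = m + 3 from rfl, show m + 1 + 1 = m + 2 from rfl] at h1
    have hA : Aseq (m + 4) = 16 * (Aseq (m + 3) + Bseq (m + 3)) := by
      simp [Aseq, Bseq, ABseq]
    have hB : Bseq (m + 4) = 16 ^ (m + 2) - Aseq (m + 2) - Bseq (m + 2) := by
      simp [Aseq, Bseq, ABseq]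
    have hv4 : vseq (m + 4) = 16 * vseq (m + 3) - vseq (m + 2) := by
      simp [vseq]
    have hv3 : vseq (m + 3) = 16 * vseq (m + 2) - vseq (m + 1) := by
      simp [vseq]
    have hp : (16 : ℤ) ^ (m + 4) = 16 ^ (m + 2) * 256 := by ring
    show Aseq (m + 4) + 2 * Bseq (m + 4) = 16 ^ (m + 4) - vseq (m + 3) - vseq (m + 4)
    rw [hA, hB, hv4, hv3, hp]
    rw [hv3, show (16:ℤ)^(m+3) = 16^(m+2)*16 by ring] at h1
    linarith
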